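/- arXiv:1108.0460 — 3 statements merged into one kernel-verified Lean document; each statement's English description precedes it below -/
import Mathlib

section
/- Fix α ∈ [0,1) and a constant C > 0. Suppose k, l ∈ ℤ^n satisfy, for every coordinate j = 1,…,n, the two inequalities ⟨k⟩^{α/(1−α)}(k_j − C) < ⟨l⟩^{α/(1−α)}(l_j + C) and ⟨k⟩^{α/(1−α)}(k_j + C) > ⟨l⟩^{α/(1−α)}(l_j − C). Then there exist constants c₁, c₂ > 0 depending only on n, α, C such that c₁⟨l⟩ ≤ ⟨k⟩ ≤ c₂⟨l⟩. -/
open Real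

/-- Japanese bracket `⟨k⟩ = (1+|k|²)^{1/2}` of a lattice point `k ∈ ℤⁿ`. -/
noncomputable def jbracket {n : ℕ} (k : Fin n → ℤ) : ℝ :=
  Real.sqrt (1 + ∑ i, ((k i : ℝ)) ^ 2)

/-! If the supports overlap, then for every `j` we have `|X kⱼ - Y lⱼ| < C (X + Y)` with
`X = ⟨k⟩^s`, `Y = ⟨l⟩^s` and `s = α/(1-α) ≥ 0`. When `⟨k⟩ ≥ ⟨l⟩`, hence `X ≥ Y`, dividing by
`X` gives `|kⱼ| ≤ |lⱼ| + 2C` coordinatewise, so `⟨k⟩ ≲ ⟨l⟩`; by symmetry of the overlap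
condition in `k` and `l` this gives both bounds. -/

lemma one_le_jbracket {n : ℕ} (k : Fin n → ℤ) : 1 ≤ jbracket k :=
  Real.one_le_sqrt.mpr (le_add_of_nonneg_right (by positivity))

lemma abs_le_abs_add_of_abs_mul_sub_mul_le {a b X Y C : ℝ} (hX : 0 < X) (hY : 0 ≤ Y)
    (hYX : Y ≤ X) (h : |X * a - Y * b| ≤ C * (X + Y)) : |a| ≤ |b| + 2 * C := by
  have hC : 0 ≤ C := nonneg_of_mul_nonneg_left ((abs_nonneg _).trans h) (by linarith)
  have hXa : X * |a| ≤ X * (|b| + 2 * C) :=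
    calc X * |a| = |X * a - Y * b + Y * b| := by
          rw [sub_add_cancel, abs_mul, abs_of_pos hX]
      _ ≤ C * (X + Y) + Y * |b| := by
          grw [abs_add_le, h, abs_mul, abs_of_nonneg hY]
      _ ≤ X * (|b| + 2 * C) := by
          linarith [mul_nonneg hC (sub_nonneg.2 hYX), mul_nonneg (abs_nonneg b) (sub_nonneg.2 hYX)]
  exact le_of_mul_le_mul_left hXa hX

lemma jbracket_le_of_abs_le_abs_add {n : ℕ} {D : ℝ} {k l : Fin n → ℤ}
    (h : ∀ j, |(k j : ℝ)| ≤ |(l j : ℝ)| + D) :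
    jbracket k ≤ Real.sqrt (2 + 2 * n * D ^ 2) * jbracket l := by
  have hcoord : ∀ j, (k j : ℝ) ^ 2 ≤ 2 * (l j : ℝ) ^ 2 + 2 * D ^ 2 := fun j => by
    have hsq : |(k j : ℝ)| ^ 2 ≤ (|(l j : ℝ)| + D) ^ 2 :=
      pow_le_pow_left₀ (abs_nonneg _) (h j) 2
    rw [sq_abs] at hsq
    nlinarith [sq_abs (l j : ℝ), sq_nonneg (|(l j : ℝ)| - D)]
  have hsum : ∑ i, (k i : ℝ) ^ 2 ≤ 2 * ∑ i, (l i : ℝ) ^ 2 + 2 * n * D ^ 2 := by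
    grw [Finset.sum_le_sum fun j _ => hcoord j]
    simp only [Finset.sum_add_distrib, ← Finset.mul_sum, Finset.sum_const, Finset.card_univ,
      Fintype.card_fin, nsmul_eq_mul]
    linarith
  have hl : 0 ≤ ∑ i, (l i : ℝ) ^ 2 := by positivity
  unfold jbracket
  rw [← Real.sqrt_mul (by positivity)]
  gcongr
  nlinarith [mul_nonneg (mul_nonneg n.cast_nonneg (sq_nonneg D)) hl]

lemma jbracket_le_of_overlap {n : ℕ} {s : ℝ} (hs : 0 ≤ s) (C : ℝ) {k l : Fin n → ℤ}
    (h₁ : ∀ j, jbracket k ^ s * ((k j : ℝ) - C) < jbracket l ^ s * ((l j : ℝ) + C))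
    (h₂ : ∀ j, jbracket k ^ s * ((k j : ℝ) + C) > jbracket l ^ s * ((l j : ℝ) - C)) :
    jbracket k ≤ Real.sqrt (2 + 2 * n * (2 * C) ^ 2) * jbracket l := by
  rcases le_or_gt (jbracket k) (jbracket l) with hkl | hlk
  · have hc : 1 ≤ Real.sqrt (2 + 2 * n * (2 * C) ^ 2) :=
      Real.one_le_sqrt.mpr (by nlinarith [mul_nonneg n.cast_nonneg (sq_nonneg (2 * C))])
    exact hkl.trans (le_mul_of_one_le_left (by linarith [one_le_jbracket l]) hc)
  · refine jbracket_le_of_abs_le_abs_add fun j => ?_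
    have hl := one_le_jbracket l
    refine abs_le_abs_add_of_abs_mul_sub_mul_le (Real.rpow_pos_of_pos (by linarith) s)
      (Real.rpow_nonneg (by linarith) s)
      (Real.rpow_le_rpow (by linarith) hlk.le hs) ?_
    rw [abs_le]
    constructor <;> linarith [h₁ j, h₂ j]

theorem overlap_comparable_general (n : ℕ) (α : ℝ) (hα0 : 0 ≤ α) (hα1 : α < 1)
    (C : ℝ) :
    ∃ c₁ c₂ : ℝ, 0 < c₁ ∧ 0 < c₂ ∧
      ∀ k l : Fin n → ℤ,
        (∀ j, jbracket k ^ (α / (1 - α)) * ((k j : ℝ) - C)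
            < jbracket l ^ (α / (1 - α)) * ((l j : ℝ) + C)) →
        (∀ j, jbracket k ^ (α / (1 - α)) * ((k j : ℝ) + C)
            > jbracket l ^ (α / (1 - α)) * ((l j : ℝ) - C)) →
        c₁ * jbracket l ≤ jbracket k ∧ jbracket k ≤ c₂ * jbracket l := by
  have hs : 0 ≤ α / (1 - α) := div_nonneg hα0 (by linarith)
  set c := Real.sqrt (2 + 2 * n * (2 * C) ^ 2)
  have hc : 0 < c := Real.sqrt_pos.mpr (by positivity)
  refine ⟨c⁻¹, c, inv_pos.mpr hc, hc, fun k l h₁ h₂ => ⟨?_, jbracket_le_of_overlap hs C h₁ h₂⟩⟩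
  rw [inv_mul_le_iff₀ hc]
  exact jbracket_le_of_overlap hs C h₂ h₁

/-- If the supports of the α-decomposition symbols `η_k^α` and `η_l^α` overlap
(expressed by the coordinatewise inequalities), then `⟨k⟩ ∼ ⟨l⟩` with constants
depending only on `n`, `α`, `C`. -/
theorem overlap_comparable (n : ℕ) (α : ℝ) (hα0 : 0 ≤ α) (hα1 : α < 1)
    (C : ℝ) (hC : 0 < C) :
    ∃ c₁ c₂ : ℝ, 0 < c₁ ∧ 0 < c₂ ∧
      ∀ k l : Fin n → ℤ,
        (∀ j, jbracket k ^ (α / (1 - α)) * ((k j : ℝ) - C)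
            < jbracket l ^ (α / (1 - α)) * ((l j : ℝ) + C)) →
        (∀ j, jbracket k ^ (α / (1 - α)) * ((k j : ℝ) + C)
            > jbracket l ^ (α / (1 - α)) * ((l j : ℝ) - C)) →
        c₁ * jbracket l ≤ jbracket k ∧ jbracket k ≤ c₂ * jbracket l :=
  overlap_comparable_general n α hα0 hα1 C
end

section
/- Fix α ∈ [0,1) and a constant C > 0. Then there exists N = N(n, α, C) such that for every k ∈ ℤ^n, the set Λ(k) = { l ∈ ℤ^n : for all j, ⟨k⟩^{α/(1−α)}(k_j − C) < ⟨l⟩^{α/(1−α)}(l_j + C) and ⟨k⟩^{α/(1−α)}(k_j + C) > ⟨l⟩^{α/(1−α)}(l_j − C) } has cardinality at most N. -/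
open Real

/-!
Put `β = α / (1 - α)` and `Φ(x) = ⟨x⟩^β x`. Membership `l ∈ Λ(k)` gives
`|Φ(l) - Φ(k)| ≤ √n C (⟨k⟩^β + ⟨l⟩^β)`; since `|Φ(x)| ≈ ⟨x⟩^(β+1)`, this forces `⟨l⟩ ≍ ⟨k⟩`,
so all `Φ(l)`, `l ∈ Λ(k)`, lie in a ball of radius `≍ ⟨k⟩^β` around `Φ(k)`.
Because the weight `⟨x⟩^β` grows with `|x|`, `Φ` is strongly monotone:
`(Φ x - Φ y) · (x - y) ≥ min (⟨x⟩^β, ⟨y⟩^β) |x - y|²`. Distinct lattice points of `Λ(k)` therefore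
have `≍ ⟨k⟩^β`-separated images, and a grid argument bounds the number of such points in the ball
independently of `k`.
-/

noncomputable def japaneseBracket {E : Type*} [NormedAddCommGroup E] (x : E) : ℝ :=
  √(1 + ‖x‖ ^ 2)

local notation "⟪" x "⟫" => japaneseBracket x

section JapaneseBracket

variable {E : Type*} [NormedAddCommGroup E]

lemma one_le_japaneseBracket (x : E) : 1 ≤ ⟪x⟫ :=
  Real.one_le_sqrt.2 (by nlinarith [norm_nonneg x])

lemma japaneseBracket_pos (x : E) : 0 < ⟪x⟫ :=
  zero_lt_one.trans_le (one_le_japaneseBracket x)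

lemma norm_le_japaneseBracket (x : E) : ‖x‖ ≤ ⟪x⟫ :=
  Real.le_sqrt_of_sq_le (by linarith)

lemma japaneseBracket_le_one_add_norm (x : E) : ⟪x⟫ ≤ 1 + ‖x‖ :=
  Real.sqrt_le_iff.2 ⟨by positivity, by nlinarith [norm_nonneg x]⟩

lemma japaneseBracket_le_japaneseBracket {x y : E} (h : ‖x‖ ≤ ‖y‖) : ⟪x⟫ ≤ ⟪y⟫ :=
  Real.sqrt_le_sqrt (by gcongr)

variable [NormedSpace ℝ E]

/-- For `β = α / (1 - α)` and a lattice point `k`, `alphaCenter β k = ⟨k⟩^β k` is the centre of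
the `k`-th set of the α-covering. -/
noncomputable def alphaCenter (β : ℝ) (x : E) : E :=
  ⟪x⟫ ^ β • x

lemma norm_alphaCenter (β : ℝ) (x : E) : ‖alphaCenter β x‖ = ⟪x⟫ ^ β * ‖x‖ := by
  rw [alphaCenter, norm_smul, Real.norm_of_nonneg (by positivity [japaneseBracket_pos x])]

/-- The balls of radii `D ⟨x⟩^β` and `D ⟨y⟩^β` around the α-centres of `x` and `y` meet. -/
def AlphaOverlap (β D : ℝ) (x y : E) : Prop :=
  ‖alphaCenter β y - alphaCenter β x‖ ≤ D * (⟪x⟫ ^ β + ⟪y⟫ ^ β)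

namespace AlphaOverlap

variable {β D : ℝ} {x y : E}

lemma symm (h : AlphaOverlap β D x y) : AlphaOverlap β D y x := by
  rwa [AlphaOverlap, norm_sub_rev, add_comm]

lemma nonneg (h : AlphaOverlap β D x y) : 0 ≤ D := by
  have := japaneseBracket_pos x
  have := japaneseBracket_pos y
  exact nonneg_of_mul_nonneg_left ((norm_nonneg _).trans h) (by positivity)

lemma japaneseBracket_le_add (hβ : 0 ≤ β) (h : AlphaOverlap β D x y) :
    ⟪y⟫ ≤ ⟪x⟫ + (1 + 2 * D) := by
  have hD := h.nonneg
  rcases le_or_gt ⟪y⟫ ⟪x⟫ with hyx | hxy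
  · linarith
  have hxyβ : ⟪x⟫ ^ β ≤ ⟪y⟫ ^ β := Real.rpow_le_rpow (japaneseBracket_pos x).le hxy.le hβ
  have hyβ : 0 < ⟪y⟫ ^ β := Real.rpow_pos_of_pos (japaneseBracket_pos y) β
  have hxβ : 0 ≤ ⟪x⟫ ^ β := (Real.rpow_pos_of_pos (japaneseBracket_pos x) β).le
  have key : ⟪y⟫ ^ β * (⟪y⟫ - 1) ≤ ⟪y⟫ ^ β * (⟪x⟫ + 2 * D) :=
    calc ⟪y⟫ ^ β * (⟪y⟫ - 1) ≤ ‖alphaCenter β y‖ := by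
          rw [norm_alphaCenter]
          gcongr
          linarith [japaneseBracket_le_one_add_norm y]
      _ ≤ ‖alphaCenter β x‖ + ‖alphaCenter β y - alphaCenter β x‖ := norm_le_insert' _ _
      _ ≤ ⟪x⟫ ^ β * ⟪x⟫ + D * (⟪x⟫ ^ β + ⟪y⟫ ^ β) := by
          rw [norm_alphaCenter]
          gcongr
          exacts [norm_le_japaneseBracket x, h]
      _ ≤ ⟪y⟫ ^ β * (⟪x⟫ + 2 * D) := by
          nlinarith [mul_le_mul_of_nonneg_right hxyβ (japaneseBracket_pos x).le]
  linarith [le_of_mul_le_mul_left key hyβ]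

lemma japaneseBracket_le_mul (hβ : 0 ≤ β) (h : AlphaOverlap β D x y) :
    ⟪y⟫ ≤ (2 + 2 * D) * ⟪x⟫ := by
  nlinarith [h.japaneseBracket_le_add hβ, h.nonneg, one_le_japaneseBracket x]

lemma div_rpow_le_rpow (hβ : 0 ≤ β) (h : AlphaOverlap β D x y) :
    (⟪x⟫ / (2 + 2 * D)) ^ β ≤ ⟪y⟫ ^ β := by
  have hD := h.nonneg
  refine Real.rpow_le_rpow (by positivity [japaneseBracket_pos x]) ?_ hβ
  rw [div_le_iff₀' (by positivity)]
  exact h.symm.japaneseBracket_le_mul hβ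

lemma norm_alphaCenter_sub_le (hβ : 0 ≤ β) (h : AlphaOverlap β D x y) :
    ‖alphaCenter β y - alphaCenter β x‖ ≤ D * (1 + (2 + 2 * D) ^ β) * ⟪x⟫ ^ β := by
  have hD := h.nonneg
  have hyx : ⟪y⟫ ^ β ≤ (2 + 2 * D) ^ β * ⟪x⟫ ^ β := by
    rw [← Real.mul_rpow (by positivity) (japaneseBracket_pos x).le]
    exact Real.rpow_le_rpow (japaneseBracket_pos y).le (h.japaneseBracket_le_mul hβ) hβ
  calc _ ≤ D * (⟪x⟫ ^ β + ⟪y⟫ ^ β) := h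
    _ ≤ D * (⟪x⟫ ^ β + (2 + 2 * D) ^ β * ⟪x⟫ ^ β) := by gcongr
    _ = D * (1 + (2 + 2 * D) ^ β) * ⟪x⟫ ^ β := by ring

end AlphaOverlap

end JapaneseBracket

section Monotonicity

variable {F : Type*} [NormedAddCommGroup F] [InnerProductSpace ℝ F]

lemma min_mul_norm_sub_le_norm_smul_sub_smul {x y : F} {a b : ℝ}
    (hxy : ‖x‖ ≤ ‖y‖ → a ≤ b) (hyx : ‖y‖ ≤ ‖x‖ → b ≤ a) :
    min a b * ‖x - y‖ ≤ ‖a • x - b • y‖ := by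
  wlog h : ‖x‖ ≤ ‖y‖ generalizing x y a b
  · simpa [min_comm, norm_sub_rev] using this hyx hxy (le_of_not_ge h)
  have hab := hxy h
  rw [min_eq_left hab]
  have hy : 0 ≤ inner ℝ y (y - x) := by
    rw [inner_sub_right, real_inner_self_eq_norm_sq]
    nlinarith [real_inner_le_norm y x, norm_nonneg x]
  have key : a * ‖x - y‖ ^ 2 ≤ ‖a • x - b • y‖ * ‖x - y‖ :=
    calc a * ‖x - y‖ ^ 2 = a * inner ℝ x (x - y) + a * inner ℝ y (y - x) := by
          rw [← real_inner_self_eq_norm_sq]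
          simp only [inner_sub_left, inner_sub_right, real_inner_comm]
          ring
      _ ≤ a * inner ℝ x (x - y) + b * inner ℝ y (y - x) := by gcongr
      _ = inner ℝ (a • x - b • y) (x - y) := by
          simp only [inner_sub_left, inner_sub_right, real_inner_smul_left]
          rw [real_inner_comm x y]
          ring
      _ ≤ ‖a • x - b • y‖ * ‖x - y‖ := real_inner_le_norm _ _
  rcases (norm_nonneg (x - y)).eq_or_lt with h0 | hpos
  · simp [← h0]
  · nlinarith

lemma min_rpow_mul_norm_sub_le_norm_alphaCenter_sub {β : ℝ} (hβ : 0 ≤ β) (x y : F) :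
    min (⟪x⟫ ^ β) (⟪y⟫ ^ β) * ‖x - y‖ ≤ ‖alphaCenter β x - alphaCenter β y‖ := by
  have mono : ∀ {u v : F}, ‖u‖ ≤ ‖v‖ → ⟪u⟫ ^ β ≤ ⟪v⟫ ^ β := fun h =>
    Real.rpow_le_rpow (japaneseBracket_pos _).le (japaneseBracket_le_japaneseBracket h) hβ
  exact min_mul_norm_sub_le_norm_smul_sub_smul mono mono

lemma AlphaOverlap.div_rpow_mul_norm_sub_le {β D : ℝ} (hβ : 0 ≤ β) {x y y' : F}
    (hy : AlphaOverlap β D x y) (hy' : AlphaOverlap β D x y') :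
    (⟪x⟫ / (2 + 2 * D)) ^ β * ‖y - y'‖ ≤ ‖alphaCenter β y - alphaCenter β y'‖ :=
  calc (⟪x⟫ / (2 + 2 * D)) ^ β * ‖y - y'‖ ≤ min (⟪y⟫ ^ β) (⟪y'⟫ ^ β) * ‖y - y'‖ := by
        gcongr
        exact le_min (hy.div_rpow_le_rpow hβ) (hy'.div_rpow_le_rpow hβ)
    _ ≤ _ := min_rpow_mul_norm_sub_le_norm_alphaCenter_sub hβ y y'

end Monotonicity
section Packing

variable {ι : Type*} [Fintype ι]

lemma EuclideanSpace.norm_le_sqrt_card_mul {v : EuclideanSpace ℝ ι} {r : ℝ}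
    (hr : 0 ≤ r) (h : ∀ i, |v i| ≤ r) : ‖v‖ ≤ √(Fintype.card ι) * r := by
  rw [EuclideanSpace.norm_eq, ← Real.sqrt_sq hr, ← Real.sqrt_mul (Nat.cast_nonneg _)]
  gcongr
  calc ∑ i, ‖v i‖ ^ 2 ≤ ∑ _i : ι, r ^ 2 := by
        gcongr with i
        simpa [Real.norm_eq_abs] using h i
    _ = _ := by simp

lemma card_Icc_neg_const [DecidableEq ι] (m : ℕ) :
    (Finset.Icc (fun _ : ι => -(m : ℤ)) (fun _ => (m : ℤ))).card
      = (2 * m + 1) ^ Fintype.card ι := by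
  rw [Pi.card_Icc]
  simp only [Int.card_Icc, Finset.prod_const, Finset.card_univ]
  congr 1
  omega

lemma ncard_le_of_norm_sub_le_of_le_norm_sub {α : Type*} {S : Set α}
    (f : α → EuclideanSpace ℝ ι) (c : EuclideanSpace ℝ ι) {ρ δ : ℝ} (hδ : 0 < δ)
    (hball : ∀ a ∈ S, ‖f a - c‖ ≤ ρ * δ) (hsep : ∀ a ∈ S, ∀ b ∈ S, a ≠ b → δ ≤ ‖f a - f b‖) :
    S.Finite ∧ S.ncard ≤ (2 * ⌈(√(Fintype.card ι) + 1) * ρ⌉₊ + 1) ^ Fintype.card ι := by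
  classical
  set R := (√(Fintype.card ι) + 1) * ρ
  set s := δ / (√(Fintype.card ι) + 1)
  have hs : 0 < s := by positivity
  have hsδ : √(Fintype.card ι) * s < δ := by
    rw [mul_div_assoc', div_lt_iff₀ (by positivity)]
    linarith
  -- points of `S` in the same cell of the grid of mesh `s` are closer than `δ`
  let g : α → ι → ℤ := fun a i => ⌊(f a i - c i) / s⌋
  let cube := Finset.Icc (fun _ : ι => -(⌈R⌉₊ : ℤ)) (fun _ => (⌈R⌉₊ : ℤ))
  have hmaps : Set.MapsTo g S cube := by
    intro a ha
    have hR : ∀ i, |(f a i - c i) / s| ≤ R := fun i => by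
      rw [abs_div, abs_of_pos hs, div_le_iff₀ hs]
      calc |f a i - c i| ≤ ‖f a - c‖ := by
            simpa [Real.norm_eq_abs] using PiLp.norm_apply_le (f a - c) i
        _ ≤ ρ * δ := hball a ha
        _ = R * s := by simp only [R, s]; field_simp
    simp only [cube, Finset.coe_Icc, Set.mem_Icc]
    refine ⟨fun i => Int.le_floor.2 ?_, fun i => ?_⟩
    · push_cast
      linarith [(abs_le.1 (hR i)).1, Nat.le_ceil R]
    · have := (Int.floor_le ((f a i - c i) / s)).trans ((le_abs_self _).trans (hR i))
      exact Int.cast_le.1 (by push_cast; exact this.trans (Nat.le_ceil R))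
  have hinj : Set.InjOn g S := by
    intro a ha b hb hab
    by_contra hne
    have hclose : ∀ i, |(f a - f b) i| ≤ s := fun i => by
      have := Int.abs_sub_lt_one_of_floor_eq_floor (congrFun hab i)
      rw [← sub_div, sub_sub_sub_cancel_right, abs_div, abs_of_pos hs, div_lt_one hs] at this
      simpa using this.le
    linarith [hsep a ha b hb hne, EuclideanSpace.norm_le_sqrt_card_mul hs.le hclose]
  refine ⟨Set.Finite.of_injOn hmaps hinj cube.finite_toSet, ?_⟩
  calc S.ncard ≤ cube.card := by
        rw [← Set.ncard_coe_finset]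
        exact Set.ncard_le_ncard_of_injOn g hmaps hinj cube.finite_toSet
    _ = _ := card_Icc_neg_const _

end Packing

section Lattice

variable {n : ℕ}

noncomputable def latticePoint (k : Fin n → ℤ) : EuclideanSpace ℝ (Fin n) :=
  WithLp.toLp 2 fun i => (k i : ℝ)

lemma jbracket_eq_japaneseBracket (k : Fin n → ℤ) :
    jbracket k = ⟪latticePoint k⟫ := by
  rw [jbracket, japaneseBracket, EuclideanSpace.real_norm_sq_eq]
  rfl

lemma alphaCenter_latticePoint_apply (β : ℝ) (k : Fin n → ℤ) (j : Fin n) :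
    alphaCenter β (latticePoint k) j = jbracket k ^ β * k j := by
  simp [alphaCenter, latticePoint, jbracket_eq_japaneseBracket]

lemma one_le_norm_latticePoint_sub {k l : Fin n → ℤ} (h : k ≠ l) :
    1 ≤ ‖latticePoint k - latticePoint l‖ := by
  obtain ⟨j, hj⟩ := Function.ne_iff.1 h
  calc (1 : ℝ) ≤ |(k j : ℝ) - l j| := by exact_mod_cast Int.one_le_abs (sub_ne_zero.2 hj)
    _ ≤ ‖latticePoint k - latticePoint l‖ := by
      simpa [latticePoint] using PiLp.norm_apply_le (latticePoint k - latticePoint l) j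

lemma alphaOverlap_latticePoint {β C : ℝ} (hC : 0 ≤ C) {k l : Fin n → ℤ}
    (h : ∀ j, jbracket k ^ β * ((k j : ℝ) - C) < jbracket l ^ β * ((l j : ℝ) + C)
      ∧ jbracket k ^ β * ((k j : ℝ) + C) > jbracket l ^ β * ((l j : ℝ) - C)) :
    AlphaOverlap β (√n * C) (latticePoint k) (latticePoint l) := by
  have hcoord : ∀ j, |(alphaCenter β (latticePoint l) - alphaCenter β (latticePoint k)) j|
      ≤ C * (jbracket k ^ β + jbracket l ^ β) := fun j => by
    rw [PiLp.sub_apply, alphaCenter_latticePoint_apply, alphaCenter_latticePoint_apply, abs_le]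
    constructor <;> linarith [h j]
  have hr : 0 ≤ C * (jbracket k ^ β + jbracket l ^ β) := by
    rw [jbracket_eq_japaneseBracket, jbracket_eq_japaneseBracket]
    positivity [japaneseBracket_pos (latticePoint k), japaneseBracket_pos (latticePoint l)]
  have := EuclideanSpace.norm_le_sqrt_card_mul hr hcoord
  rwa [Fintype.card_fin, ← mul_assoc, jbracket_eq_japaneseBracket,
    jbracket_eq_japaneseBracket] at this

end Lattice

/-- Uniform finite-overlap property of the α-covering: the set of indices `l`
whose symbol support can intersect that of `k` has cardinality bounded by a
constant depending only on `n`, `α`, `C`. -/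
theorem overlap_card_bounded (n : ℕ) (α : ℝ) (hα0 : 0 ≤ α) (hα1 : α < 1)
    (C : ℝ) (hC : 0 < C) :
    ∃ N : ℕ, ∀ k : Fin n → ℤ,
      let Λ : Set (Fin n → ℤ) :=
        {l | ∀ j, jbracket k ^ (α / (1 - α)) * ((k j : ℝ) - C)
                < jbracket l ^ (α / (1 - α)) * ((l j : ℝ) + C)
              ∧ jbracket k ^ (α / (1 - α)) * ((k j : ℝ) + C)
                > jbracket l ^ (α / (1 - α)) * ((l j : ℝ) - C)}
      Λ.Finite ∧ Λ.ncard ≤ N := by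
  set β := α / (1 - α)
  have hβ : 0 ≤ β := div_nonneg hα0 (by linarith)
  set D := √n * C
  set A := 2 + 2 * D
  refine ⟨(2 * ⌈(√n + 1) * (D * (1 + A ^ β) * A ^ β)⌉₊ + 1) ^ n, fun k => ?_⟩
  intro Λ
  have hΛ : ∀ l ∈ Λ, AlphaOverlap β D (latticePoint k) (latticePoint l) :=
    fun l hl => alphaOverlap_latticePoint hC.le hl
  have hA : 0 < A := by positivity
  set δ := (⟪latticePoint k⟫ / A) ^ β with hδ_def
  have hδ : 0 < δ := by positivity [japaneseBracket_pos (latticePoint k)]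
  have hscale : ⟪latticePoint k⟫ ^ β = A ^ β * δ := by
    rw [hδ_def, Real.div_rpow (japaneseBracket_pos _).le hA.le]
    field_simp
  simpa only [Fintype.card_fin] using ncard_le_of_norm_sub_le_of_le_norm_sub
    (fun l => alphaCenter β (latticePoint l)) (alphaCenter β (latticePoint k)) hδ
    (fun l hl => ((hΛ l hl).norm_alphaCenter_sub_le hβ).trans_eq (by rw [hscale]; ring))
    (fun l hl l' hl' hne => (le_mul_of_one_le_right hδ.le (one_le_norm_latticePoint_sub hne)).trans
      ((hΛ l hl).div_rpow_mul_norm_sub_le hβ (hΛ l' hl')))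
end

section
/- Let α ∈ [0,1) and C > 0. Suppose k, k⁽¹⁾, k⁽²⁾ ∈ ℤ^n satisfy, for every j = 1,…,n: ⟨k⟩^{α/(1−α)}(k_j − C) < ⟨k⁽¹⁾⟩^{α/(1−α)}(k⁽¹⁾_j + C) + ⟨k⁽²⁾⟩^{α/(1−α)}(k⁽²⁾_j + C) and ⟨k⟩^{α/(1−α)}(k_j + C) > ⟨k⁽¹⁾⟩^{α/(1−α)}(k⁽¹⁾_j − C) + ⟨k⁽²⁾⟩^{α/(1−α)}(k⁽²⁾_j − C). Let ⟨k_max⟩ ≥ ⟨k_med⟩ ≥ ⟨k_min⟩ be the decreasing rearrangement of ⟨k⟩, ⟨k⁽¹⁾⟩, ⟨k⁽²⁾⟩. Then there is a constant M = M(n, α, C) ≥ 1 with ⟨k_max⟩ ≤ M ⟨k_med⟩. -/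
open Real

lemma jb_sum_sq_nonneg {n : ℕ} (k : Fin n → ℤ) : (0:ℝ) ≤ ∑ i, ((k i : ℝ)) ^ 2 :=
  Finset.sum_nonneg fun _ _ => sq_nonneg _

lemma jbracket_sq {n : ℕ} (k : Fin n → ℤ) :
    jbracket k ^ 2 - 1 = ∑ i, ((k i : ℝ)) ^ 2 := by
  rw [jbracket, Real.sq_sqrt (by linarith [jb_sum_sq_nonneg k])]; ring

lemma abs_coord_le {n : ℕ} (k : Fin n → ℤ) (j : Fin n) : |((k j : ℝ))| ≤ jbracket k := by
  rw [jbracket]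
  have h0 : ((k j:ℝ))^2 ≤ ∑ i, ((k i : ℝ))^2 :=
    Finset.single_le_sum (f := fun i => ((k i:ℝ))^2) (fun i _ => sq_nonneg _)
      (Finset.mem_univ j)
  have h1 : ((k j:ℝ))^2 ≤ 1 + ∑ i, ((k i : ℝ))^2 := by linarith
  calc |((k j:ℝ))| = Real.sqrt (((k j:ℝ))^2) := (Real.sqrt_sq_eq_abs _).symm
    _ ≤ _ := Real.sqrt_le_sqrt h1

lemma sqrt_sum_sq_le {n : ℕ} (f : Fin n → ℝ) :
    Real.sqrt (∑ i, f i ^ 2) ≤ ∑ i, |f i| := by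
  set S := ∑ i, |f i| with hSdef
  have hS0 : 0 ≤ S := Finset.sum_nonneg fun i _ => abs_nonneg _
  have h : ∑ i, f i ^2 ≤ S^2 := by
    have hS : ∀ i, |f i| ≤ S := fun i =>
      Finset.single_le_sum (f := fun i => |f i|) (fun i _ => abs_nonneg _)
        (Finset.mem_univ i)
    calc ∑ i, f i^2 = ∑ i, |f i| * |f i| := Finset.sum_congr rfl fun i _ => by
          rw [pow_two, ← abs_mul_abs_self]
      _ ≤ ∑ i, |f i| * S := Finset.sum_le_sum fun i _ =>
          mul_le_mul_of_nonneg_left (hS i) (abs_nonneg _)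
      _ = S^2 := by rw [← Finset.sum_mul]; ring
  calc Real.sqrt (∑ i, f i^2) ≤ Real.sqrt (S^2) := Real.sqrt_le_sqrt h
    _ = |S| := Real.sqrt_sq_eq_abs _
    _ = S := abs_of_nonneg hS0

lemma scalar_lemma (n : ℕ) (p C : ℝ) (hp : 0 ≤ p) (hC : 0 < C)
    (B Ba Bb : ℝ) (hB : 1 ≤ B) (ha : 1 ≤ Ba) (hb : 1 ≤ Bb)
    (h : B ^ p * Real.sqrt (B ^ 2 - 1)
        ≤ (n : ℝ) * (Ba ^ p * Ba + Bb ^ p * Bb + C * (B ^ p + Ba ^ p + Bb ^ p))) :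
    B ≤ (2 + 4 * (n:ℝ) * C + (8 * (n:ℝ) + 8 * (n:ℝ) * C + 1)) * max Ba Bb := by
  set D := max Ba Bb with hDdef
  have hD : 1 ≤ D := le_trans ha (le_max_left _ _)
  have hD0 : (0:ℝ) < D := by linarith
  have hn0 : (0:ℝ) ≤ (n:ℝ) := Nat.cast_nonneg n
  have hnC : (0:ℝ) ≤ (n:ℝ) * C := by positivity
  by_cases hBT : B < 2 + 4 * (n:ℝ) * C
  · nlinarith [mul_le_mul_of_nonneg_left hD (show (0:ℝ) ≤ 2 + 4*(n:ℝ)*C by linarith)]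
  · push_neg at hBT
    have hB2 : (2:ℝ) ≤ B := by nlinarith
    have hB0 : (0:ℝ) < B := by linarith
    have hBp : (0:ℝ) < B ^ p := Real.rpow_pos_of_pos hB0 p
    have hDp : (0:ℝ) < D ^ p := Real.rpow_pos_of_pos hD0 p
    have haD : Ba ^ p ≤ D ^ p := Real.rpow_le_rpow (by linarith) (le_max_left _ _) hp
    have hbD : Bb ^ p ≤ D ^ p := Real.rpow_le_rpow (by linarith) (le_max_right _ _) hp
    have hsqrt : B / 2 ≤ Real.sqrt (B ^ 2 - 1) := by
      rw [Real.le_sqrt (by linarith) (by nlinarith)]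
      nlinarith
    have h2 : B ^ p * (B / 2) ≤ (n:ℝ) * (2 * (D ^ p * D) + C * B ^ p + 2 * C * (D ^ p)) := by
      have hstep : B ^ p * (B/2) ≤ B ^ p * Real.sqrt (B^2 - 1) :=
        mul_le_mul_of_nonneg_left hsqrt (le_of_lt hBp)
      have hBaBa : Ba ^ p * Ba ≤ D ^ p * D :=
        mul_le_mul haD (le_max_left _ _) (by linarith) (le_of_lt hDp)
      have hBbBb : Bb ^ p * Bb ≤ D ^ p * D :=
        mul_le_mul hbD (le_max_right _ _) (by linarith) (le_of_lt hDp)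
      nlinarith [mul_le_mul_of_nonneg_left haD (le_of_lt hC),
        mul_le_mul_of_nonneg_left hbD (le_of_lt hC)]
    have hnCB : (n:ℝ) * C ≤ B / 4 := by linarith
    have hDpD : D ^ p ≤ D ^ p * D := le_mul_of_one_le_right (le_of_lt hDp) hD
    have h3 : B ^ p * B ≤ (8*(n:ℝ) + 8*(n:ℝ)*C) * (D ^ p * D) := by
      nlinarith [mul_le_mul_of_nonneg_right hnCB (le_of_lt hBp),
        mul_le_mul_of_nonneg_left hDpD (show (0:ℝ) ≤ 2*(n:ℝ)*C by positivity)]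
    set A := 8*(n:ℝ) + 8*(n:ℝ)*C + 1 with hAdef
    have hA1 : 1 ≤ A := by nlinarith
    have h4 : B ^ (p+1) ≤ (A * D) ^ (p+1) := by
      have e1 : B ^ (p+1) = B ^ p * B := Real.rpow_add_one (ne_of_gt hB0) p
      have e2 : D ^ (p+1) = D ^ p * D := Real.rpow_add_one (ne_of_gt hD0) p
      have e3 : (A * D) ^ (p+1) = A ^ (p+1) * D ^ (p+1) :=
        Real.mul_rpow (by linarith) (by linarith)
      have hAA : A ≤ A ^ (p+1) := by
        calc A = A ^ (1:ℝ) := (Real.rpow_one A).symm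
          _ ≤ A ^ (p+1) := Real.rpow_le_rpow_of_exponent_le hA1 (by linarith)
      have hDp1 : (0:ℝ) < D ^ (p+1) := Real.rpow_pos_of_pos hD0 _
      calc B ^ (p+1) = B ^ p * B := e1
        _ ≤ (8*(n:ℝ) + 8*(n:ℝ)*C) * (D ^ p * D) := h3
        _ ≤ A * (D ^ p * D) := mul_le_mul_of_nonneg_right (by linarith)
              (by positivity)
        _ = A * D ^ (p+1) := by rw [e2]
        _ ≤ A ^ (p+1) * D ^ (p+1) := mul_le_mul_of_nonneg_right hAA (le_of_lt hDp1)
        _ = (A * D) ^ (p+1) := e3.symm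
    have h5 : B ≤ A * D := by
      by_contra hcon
      push_neg at hcon
      have := Real.rpow_lt_rpow (by positivity) hcon (show (0:ℝ) < p + 1 by linarith)
      linarith
    have h6 : A * D ≤ (2 + 4*(n:ℝ)*C + A) * D :=
      mul_le_mul_of_nonneg_right (by linarith) (le_of_lt hD0)
    linarith

lemma core_bound {n : ℕ} (p C : ℝ) (hp : 0 ≤ p) (hC : 0 < C) (t a b : Fin n → ℤ)
    (h : ∀ j, jbracket t ^ p * |((t j : ℝ))| ≤
         jbracket a ^ p * |((a j : ℝ))| + jbracket b ^ p * |((b j : ℝ))|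
         + C * (jbracket t ^ p + jbracket a ^ p + jbracket b ^ p)) :
    jbracket t ^ p * Real.sqrt (jbracket t ^ 2 - 1)
      ≤ (n:ℝ) * (jbracket a ^ p * jbracket a + jbracket b ^ p * jbracket b
          + C * (jbracket t ^ p + jbracket a ^ p + jbracket b ^ p)) := by
  have htp : (0:ℝ) ≤ jbracket t ^ p :=
    le_of_lt (Real.rpow_pos_of_pos (by linarith [one_le_jbracket t]) p)
  have hap : (0:ℝ) ≤ jbracket a ^ p :=
    le_of_lt (Real.rpow_pos_of_pos (by linarith [one_le_jbracket a]) p)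
  have hbp : (0:ℝ) ≤ jbracket b ^ p :=
    le_of_lt (Real.rpow_pos_of_pos (by linarith [one_le_jbracket b]) p)
  rw [jbracket_sq]
  calc jbracket t ^ p * Real.sqrt (∑ i, ((t i:ℝ))^2)
      ≤ jbracket t ^ p * ∑ i, |((t i:ℝ))| :=
        mul_le_mul_of_nonneg_left (sqrt_sum_sq_le _) htp
    _ = ∑ i, jbracket t ^ p * |((t i:ℝ))| := by rw [Finset.mul_sum]
    _ ≤ ∑ _i : Fin n, (jbracket a ^ p * jbracket a + jbracket b ^ p * jbracket b
          + C * (jbracket t ^ p + jbracket a ^ p + jbracket b ^ p)) :=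
        Finset.sum_le_sum fun i _ => le_trans (h i) (by
          have h1 := abs_coord_le a i
          have h2 := abs_coord_le b i
          nlinarith [mul_le_mul_of_nonneg_left h1 hap, mul_le_mul_of_nonneg_left h2 hbp])
    _ = (n:ℝ) * (jbracket a ^ p * jbracket a + jbracket b ^ p * jbracket b
          + C * (jbracket t ^ p + jbracket a ^ p + jbracket b ^ p)) := by
        simp [Finset.sum_const, Finset.card_univ, nsmul_eq_mul]
        ring

lemma med_aux (M x y z : ℝ) (hM : 1 ≤ M) (hx : 0 ≤ x) (hy : 0 ≤ y) (hz : 0 ≤ z)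
    (Hx : x ≤ M * max y z) :
    x ≤ M * max (min x y) (max (min x z) (min y z)) := by
  set med := max (min x y) (max (min x z) (min y z)) with hmed
  have hmed0 : 0 ≤ med := le_trans (le_min hx hy) (le_max_left _ _)
  rcases le_total x y with h|h
  · have h1 : min x y ≤ med := le_max_left _ _
    rw [min_eq_left h] at h1
    nlinarith
  · rcases le_total x z with h2|h2
    · have h1 : min x z ≤ med := le_trans (le_max_left _ _) (le_max_right _ _)
      rw [min_eq_left h2] at h1
      nlinarith
    · have hy' : y ≤ med := by
        rw [hmed, min_eq_right h]
        exact le_max_left _ _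
      have hz' : z ≤ med := by
        rw [hmed, min_eq_right h2]
        exact le_trans (le_max_left _ _) (le_max_right _ _)
      calc x ≤ M * max y z := Hx
        _ ≤ M * med := mul_le_mul_of_nonneg_left (max_le hy' hz') (by linarith)

/-- "Two highest frequencies are comparable": if the frequency support of the
product `□_{k¹}^α f · □_{k²}^α g` can intersect that of `η_k^α` (expressed by
the coordinatewise inequalities), then the largest of `⟨k⟩, ⟨k¹⟩, ⟨k²⟩` is
bounded by `M` times the median one, for a constant `M = M(n, α, C) ≥ 1`.
The median of three values is the maximum of the pairwise minima. -/
theorem product_highest_frequencies_comparable (n : ℕ) (α : ℝ)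
    (hα0 : 0 ≤ α) (hα1 : α < 1) (C : ℝ) (hC : 0 < C) :
    ∃ M : ℝ, 1 ≤ M ∧
      ∀ k k1 k2 : Fin n → ℤ,
        (∀ j, jbracket k ^ (α / (1 - α)) * ((k j : ℝ) - C)
            < jbracket k1 ^ (α / (1 - α)) * ((k1 j : ℝ) + C)
              + jbracket k2 ^ (α / (1 - α)) * ((k2 j : ℝ) + C)) →
        (∀ j, jbracket k ^ (α / (1 - α)) * ((k j : ℝ) + C)
            > jbracket k1 ^ (α / (1 - α)) * ((k1 j : ℝ) - C)
              + jbracket k2 ^ (α / (1 - α)) * ((k2 j : ℝ) - C)) →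
        max (jbracket k) (max (jbracket k1) (jbracket k2))
          ≤ M * max (min (jbracket k) (jbracket k1))
              (max (min (jbracket k) (jbracket k2))
                (min (jbracket k1) (jbracket k2))) := by
  set p := α / (1 - α) with hpdef
  have hp : 0 ≤ p := div_nonneg hα0 (by linarith)
  have hn0 : (0:ℝ) ≤ (n:ℝ) := Nat.cast_nonneg n
  refine ⟨2 + 4 * (n:ℝ) * C + (8 * (n:ℝ) + 8 * (n:ℝ) * C + 1), by nlinarith, ?_⟩
  intro k k1 k2 h1 h2
  set M := 2 + 4 * (n:ℝ) * C + (8 * (n:ℝ) + 8 * (n:ℝ) * C + 1) with hMdef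
  have hM : 1 ≤ M := by rw [hMdef]; nlinarith
  set x := jbracket k with hxdef
  set y := jbracket k1 with hydef
  set z := jbracket k2 with hzdef
  have hx1 : 1 ≤ x := one_le_jbracket k
  have hy1 : 1 ≤ y := one_le_jbracket k1
  have hz1 : 1 ≤ z := one_le_jbracket k2
  have hxp : (0:ℝ) ≤ x ^ p := le_of_lt (Real.rpow_pos_of_pos (by linarith) p)
  have hyp : (0:ℝ) ≤ y ^ p := le_of_lt (Real.rpow_pos_of_pos (by linarith) p)
  have hzp : (0:ℝ) ≤ z ^ p := le_of_lt (Real.rpow_pos_of_pos (by linarith) p)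
  -- per-coordinate bounds
  have habs : ∀ j, |x ^ p * ((k j:ℝ)) - y ^ p * ((k1 j:ℝ)) - z ^ p * ((k2 j:ℝ))|
      ≤ C * (x ^ p + y ^ p + z ^ p) := by
    intro j
    have hu := h1 j
    have hv := h2 j
    rw [abs_le]
    constructor <;> nlinarith
  have hxabs : ∀ j, x ^ p * |((k j:ℝ))| ≤ y ^ p * |((k1 j:ℝ))| + z ^ p * |((k2 j:ℝ))|
      + C * (x ^ p + y ^ p + z ^ p) := by
    intro j
    have h := habs j
    have e1 : |x ^ p * ((k j:ℝ))| = x ^ p * |((k j:ℝ))| := by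
      rw [abs_mul, abs_of_nonneg hxp]
    have e2 : |y ^ p * ((k1 j:ℝ))| = y ^ p * |((k1 j:ℝ))| := by
      rw [abs_mul, abs_of_nonneg hyp]
    have e3 : |z ^ p * ((k2 j:ℝ))| = z ^ p * |((k2 j:ℝ))| := by
      rw [abs_mul, abs_of_nonneg hzp]
    have := abs_le.mp h
    rw [← e1, ← e2, ← e3]
    have l1 := le_abs_self (y ^ p * ((k1 j:ℝ)))
    have l2 := neg_abs_le (y ^ p * ((k1 j:ℝ)))
    have l3 := le_abs_self (z ^ p * ((k2 j:ℝ)))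
    have l4 := neg_abs_le (z ^ p * ((k2 j:ℝ)))
    have l5 := le_abs_self (x ^ p * ((k j:ℝ)))
    have l6 := neg_abs_le (x ^ p * ((k j:ℝ)))
    rcases abs_cases (x ^ p * ((k j:ℝ))) with ⟨e, _⟩|⟨e, _⟩ <;> rw [e] <;> linarith [this.1, this.2]
  have hyabs : ∀ j, y ^ p * |((k1 j:ℝ))| ≤ x ^ p * |((k j:ℝ))| + z ^ p * |((k2 j:ℝ))|
      + C * (y ^ p + x ^ p + z ^ p) := by
    intro j
    have h := habs j
    have e1 : |x ^ p * ((k j:ℝ))| = x ^ p * |((k j:ℝ))| := by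
      rw [abs_mul, abs_of_nonneg hxp]
    have e2 : |y ^ p * ((k1 j:ℝ))| = y ^ p * |((k1 j:ℝ))| := by
      rw [abs_mul, abs_of_nonneg hyp]
    have e3 : |z ^ p * ((k2 j:ℝ))| = z ^ p * |((k2 j:ℝ))| := by
      rw [abs_mul, abs_of_nonneg hzp]
    have := abs_le.mp h
    rw [← e1, ← e2, ← e3]
    have l1 := le_abs_self (x ^ p * ((k j:ℝ)))
    have l2 := neg_abs_le (x ^ p * ((k j:ℝ)))
    have l3 := le_abs_self (z ^ p * ((k2 j:ℝ)))
    have l4 := neg_abs_le (z ^ p * ((k2 j:ℝ)))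
    rcases abs_cases (y ^ p * ((k1 j:ℝ))) with ⟨e, _⟩|⟨e, _⟩ <;> rw [e] <;> linarith [this.1, this.2]
  have hzabs : ∀ j, z ^ p * |((k2 j:ℝ))| ≤ x ^ p * |((k j:ℝ))| + y ^ p * |((k1 j:ℝ))|
      + C * (z ^ p + x ^ p + y ^ p) := by
    intro j
    have h := habs j
    have e1 : |x ^ p * ((k j:ℝ))| = x ^ p * |((k j:ℝ))| := by
      rw [abs_mul, abs_of_nonneg hxp]
    have e2 : |y ^ p * ((k1 j:ℝ))| = y ^ p * |((k1 j:ℝ))| := by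
      rw [abs_mul, abs_of_nonneg hyp]
    have e3 : |z ^ p * ((k2 j:ℝ))| = z ^ p * |((k2 j:ℝ))| := by
      rw [abs_mul, abs_of_nonneg hzp]
    have := abs_le.mp h
    rw [← e1, ← e2, ← e3]
    have l1 := le_abs_self (x ^ p * ((k j:ℝ)))
    have l2 := neg_abs_le (x ^ p * ((k j:ℝ)))
    have l3 := le_abs_self (y ^ p * ((k1 j:ℝ)))
    have l4 := neg_abs_le (y ^ p * ((k1 j:ℝ)))
    rcases abs_cases (z ^ p * ((k2 j:ℝ))) with ⟨e, _⟩|⟨e, _⟩ <;> rw [e] <;> linarith [this.1, this.2]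
  -- core bounds and scalar lemma
  have Hx : x ≤ M * max y z := by
    have hcb := core_bound p C hp hC k k1 k2 hxabs
    exact scalar_lemma n p C hp hC x y z hx1 hy1 hz1 hcb
  have Hy : y ≤ M * max x z := by
    have hcb := core_bound p C hp hC k1 k k2 hyabs
    exact scalar_lemma n p C hp hC y x z hy1 hx1 hz1 hcb
  have Hz : z ≤ M * max x y := by
    have hcb := core_bound p C hp hC k2 k k1 hzabs
    exact scalar_lemma n p C hp hC z x y hz1 hx1 hy1 hcb
  -- median assembly
  have Gx : x ≤ M * max (min x y) (max (min x z) (min y z)) :=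
    med_aux M x y z hM (by linarith) (by linarith) (by linarith) Hx
  have Gy : y ≤ M * max (min y x) (max (min y z) (min x z)) :=
    med_aux M y x z hM (by linarith) (by linarith) (by linarith) Hy
  have Gz : z ≤ M * max (min z x) (max (min z y) (min x y)) :=
    med_aux M z x y hM (by linarith) (by linarith) (by linarith) Hz
  have ey : (max (min y x) (max (min y z) (min x z)))
      = (max (min x y) (max (min x z) (min y z))) := by
    rw [min_comm y x, max_comm (min y z) (min x z)]
  have ez : (max (min z x) (max (min z y) (min x y)))
      = (max (min x y) (max (min x z) (min y z))) := by
    rw [min_comm z x, min_comm z y, max_comm (min y z) (min x y), max_left_comm]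
  rw [ey] at Gy
  rw [ez] at Gz
  exact max_le Gx (max_le Gy Gz)
end
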